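/- arXiv:2309.06267 — 2 statements merged into one kernel-verified Lean document; each statement's English description precedes it below -/
import Mathlib

section
/- Let A be a countable alphabet, P a probability distribution on A with finite source entropy H(P) = -∑_{a∈A} P(a) log₂ P(a), S a proper dictionary over A, and α ∈ S. Then the entropy of the extended dictionary satisfies H(S[α]) = H(S) + P(α)·H(P), where H(S) = -∑_{β∈S} P(β) log₂ P(β) and the sums are taken in [0,∞]. -/
open scoped ENNReal
open Filter

/-- The probability of a finite string, obtained by extending the
distribution `P` multiplicatively: `P(a₁⋯aₙ) = ∏ᵢ P(aᵢ)`. -/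
noncomputable def strProb {A : Type*} (P : PMF A) (l : List A) : ℝ≥0∞ :=
  (l.map fun a => P a).prod

/-- A dictionary is a set of nonempty finite strings. -/
def IsDictionary {A : Type*} (D : Set (List A)) : Prop :=
  ∀ α ∈ D, α ≠ []

/-- A dictionary is proper if no string in it is a (proper) prefix of
another string in it. -/
def IsProper {A : Type*} (D : Set (List A)) : Prop :=
  ∀ α ∈ D, ∀ β ∈ D, α <+: β → α = β

/-- A dictionary is complete if every infinite sequence over `A` has a
prefix in it. -/
def IsCompleteDict {A : Type*} (D : Set (List A)) : Prop :=
  ∀ x : ℕ → A, ∃ α ∈ D, α = (List.range α.length).map x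

/-- The probability that the length-`n` prefix of a random infinite sequence
has some prefix belonging to `D`. -/
noncomputable def prefixProb {A : Type*} (P : PMF A) (D : Set (List A)) (n : ℕ) : ℝ≥0∞ :=
  ∑' γ : {γ : List A // γ.length = n ∧ ∃ β ∈ D, β <+: γ}, strProb P γ

/-- `D` is almost surely complete: under the infinite product measure `P^ℕ`,
the event that an infinite sequence has a prefix in `D` has probability `1`.
(By continuity from below, this probability is the limit, as `n → ∞`, of the
probability that the length-`n` prefix has a prefix in `D`.) -/
def IsASC {A : Type*} (P : PMF A) (D : Set (List A)) : Prop :=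
  Tendsto (prefixProb P D) atTop (nhds 1)

/-- `Tset D n` = strings of length `n` having no prefix in `D`. -/
def Tset {A : Type*} (D : Set (List A)) (n : ℕ) : Set (List A) :=
  {α | α.length = n ∧ ∀ β ∈ D, ¬ β <+: α}

/-- `Dperp D n = {α ∈ D : |α| = n} ∪ Tₙ`. -/
def Dperp {A : Type*} (D : Set (List A)) (n : ℕ) : Set (List A) :=
  {α ∈ D | α.length = n} ∪ Tset D n

/-- `Dn D n = {α ∈ D : |α| < n} ∪ Dₙ^⊥`. -/
def Dn {A : Type*} (D : Set (List A)) (n : ℕ) : Set (List A) :=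
  {α ∈ D | α.length < n} ∪ Dperp D n

/-- The one-letter extensions `αA = {αa : a ∈ A}` of a string `α`. -/
def oneExt {A : Type*} (α : List A) : Set (List A) :=
  {l | ∃ a : A, l = α ++ [a]}

/-- The extension `D[α] = (D \ {α}) ∪ αA` of a dictionary at `α`. -/
def extendDict {A : Type*} (D : Set (List A)) (α : List A) : Set (List A) :=
  (D \ {α}) ∪ oneExt α

/-- The nonnegative entropy contribution `-p log₂ p ∈ [0,∞]` of a
probability value `p`. -/
noncomputable def entTerm (p : ℝ≥0∞) : ℝ≥0∞ :=
  ENNReal.ofReal (-(p.toReal * Real.logb 2 p.toReal))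

/-- The entropy `H(E) = -∑_{α∈E} P(α) log₂ P(α)` of a dictionary, in `[0,∞]`. -/
noncomputable def dictEntropy {A : Type*} (P : PMF A) (E : Set (List A)) : ℝ≥0∞ :=
  ∑' α : E, entTerm (strProb P α)

/-- The average length `l̄(E) = ∑_{α∈E} P(α)|α|` of a dictionary, in `[0,∞]`. -/
noncomputable def avgLen {A : Type*} (P : PMF A) (E : Set (List A)) : ℝ≥0∞ :=
  ∑' α : E, strProb P α * (α : List A).length

/-- The source entropy `H(P) = -∑_{a∈A} P(a) log₂ P(a)`, in `[0,∞]`. -/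
noncomputable def srcEntropy {A : Type*} (P : PMF A) : ℝ≥0∞ :=
  ∑' a : A, entTerm (P a)

/-! Properness makes the one-letter extensions `αA` disjoint from `S`, so passing from `S` to
`S[α]` trades the weight `-P(α) log₂ P(α)` of `α` for the entropy of `αA`. Since
`x ↦ -x log x` satisfies the Leibniz rule on products, the term of `αa` is
`P(a)·(-P(α) log₂ P(α)) + P(α)·(-P(a) log₂ P(a))`, and summing over `a` gives back the
weight of `α` plus `P(α)·H(P)`. -/
section

variable {A : Type*} (P : PMF A)

theorem strProb_le_one (l : List A) : strProb P l ≤ 1 := by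
  induction l with
  | nil => simp [strProb]
  | cons a l ih => simpa [strProb] using mul_le_one' (P.coe_le_one a) ih

@[simp]
theorem strProb_append_singleton (α : List A) (a : A) :
    strProb P (α ++ [a]) = strProb P α * P a := by
  simp [strProb]

theorem entTerm_eq_ofReal_negMulLog (p : ℝ≥0∞) :
    entTerm p = ENNReal.ofReal (Real.negMulLog p.toReal / Real.log 2) := by
  rw [entTerm, Real.negMulLog, Real.logb, neg_mul, neg_div, mul_div_assoc]

theorem entTerm_mul {p q : ℝ≥0∞} (hp : p ≤ 1) (hq : q ≤ 1) :
    entTerm (p * q) = q * entTerm p + p * entTerm q := by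
  have hp' : p.toReal ≤ 1 := ENNReal.toReal_le_of_le_ofReal zero_le_one (by simpa using hp)
  have hq' : q.toReal ≤ 1 := ENNReal.toReal_le_of_le_ofReal zero_le_one (by simpa using hq)
  have hlog2 : 0 < Real.log 2 := Real.log_pos one_lt_two
  have hHp := div_nonneg (Real.negMulLog_nonneg ENNReal.toReal_nonneg hp') hlog2.le
  have hHq := div_nonneg (Real.negMulLog_nonneg ENNReal.toReal_nonneg hq') hlog2.le
  simp only [entTerm_eq_ofReal_negMulLog, ENNReal.toReal_mul, Real.negMulLog_mul, add_div,
    mul_div_assoc]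
  rw [ENNReal.ofReal_add (mul_nonneg ENNReal.toReal_nonneg hHp)
      (mul_nonneg ENNReal.toReal_nonneg hHq),
    ENNReal.ofReal_mul ENNReal.toReal_nonneg, ENNReal.ofReal_mul ENNReal.toReal_nonneg,
    ENNReal.ofReal_toReal (ne_top_of_le_ne_top ENNReal.one_ne_top hq),
    ENNReal.ofReal_toReal (ne_top_of_le_ne_top ENNReal.one_ne_top hp)]

theorem dictEntropy_union {s t : Set (List A)} (hst : Disjoint s t) :
    dictEntropy P (s ∪ t) = dictEntropy P s + dictEntropy P t :=
  ENNReal.summable.tsum_union_disjoint (f := fun β => entTerm (strProb P β)) hst ENNReal.summable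

theorem dictEntropy_insert {α : List A} {s : Set (List A)} (hα : α ∉ s) :
    dictEntropy P (insert α s) = entTerm (strProb P α) + dictEntropy P s := by
  rw [Set.insert_eq, dictEntropy_union P (Set.disjoint_singleton_left.mpr hα), dictEntropy,
    tsum_singleton α fun β => entTerm (strProb P β)]

theorem oneExt_eq_range (α : List A) : oneExt α = Set.range (α ++ [·]) := by
  ext l
  simp [oneExt, eq_comm]

theorem dictEntropy_oneExt (α : List A) :
    dictEntropy P (oneExt α) = entTerm (strProb P α) + strProb P α * srcEntropy P := by
  have hinj : Function.Injective (α ++ [·] : A → List A) := fun a b h => by simpa using h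
  rw [dictEntropy, oneExt_eq_range, tsum_range (fun β => entTerm (strProb P β)) hinj]
  simp only [strProb_append_singleton,
    entTerm_mul (strProb_le_one P α) (P.coe_le_one _)]
  rw [ENNReal.tsum_add, ENNReal.tsum_mul_right, ENNReal.tsum_mul_left, P.tsum_coe, one_mul,
    srcEntropy]

end

theorem IsProper.disjoint_oneExt {A : Type*} {S : Set (List A)} (hS : IsProper S) {α : List A}
    (hα : α ∈ S) : Disjoint S (oneExt α) := by
  rw [Set.disjoint_right]
  rintro _ ⟨a, rfl⟩ hαa
  simpa using congrArg List.length (hS α hα _ hαa (List.prefix_append α [a]))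

theorem dictEntropy_extendDict_general {A : Type*} (P : PMF A)
    (S : Set (List A)) (hprop : IsProper S) (α : List A) (hα : α ∈ S) :
    dictEntropy P (extendDict S α)
      = dictEntropy P S + strProb P α * srcEntropy P := by
  calc dictEntropy P (extendDict S α)
      = dictEntropy P (S \ {α}) + dictEntropy P (oneExt α) :=
        dictEntropy_union P ((hprop.disjoint_oneExt hα).mono_left Set.sdiff_subset)
    _ = (entTerm (strProb P α) + dictEntropy P (S \ {α})) + strProb P α * srcEntropy P := by
        rw [dictEntropy_oneExt, ← add_assoc, add_comm (dictEntropy P _)]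
    _ = dictEntropy P S + strProb P α * srcEntropy P := by
        rw [← dictEntropy_insert P (fun h => h.2 rfl), Set.insert_sdiff_self_of_mem hα]

/-- For a proper dictionary `S` and `α ∈ S`, if the source
entropy is finite then `H(S[α]) = H(S) + P(α)·H(P)`. -/
theorem dictEntropy_extendDict {A : Type*} [Countable A] (P : PMF A)
    (hH : srcEntropy P < ⊤) (S : Set (List A)) (hdict : IsDictionary S)
    (hprop : IsProper S) (α : List A) (hα : α ∈ S) :
    dictEntropy P (extendDict S α)
      = dictEntropy P S + strProb P α * srcEntropy P :=
  dictEntropy_extendDict_general P S hprop α hα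
end

section
/- Let A be a countable alphabet, P a probability distribution on A, and D a proper and almost surely complete dictionary over A. Let β be any finite string over A such that no string of D of length strictly less than |β| is a prefix of β. Then ∑_{α ∈ (D,β)} P(α)|α| ≥ P(β)|β|, where (D,β) = {α ∈ D : β is a prefix of α} and the sum is taken in [0,∞]. -/
open scoped ENNReal
open Filter

/-!
Every string `γ` of length `n ≥ |β|` extending `β` either has a prefix `δ ∈ D`, or lies in
`Tset D n`. In the first case `δ` and `β` are comparable, and the hypothesis on `β` forces
`β <+: δ`, so `γ` extends a word of `(D,β)`. Summing probabilities gives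
`P(β) ≤ ∑_{α ∈ (D,β)} P(α) + P(Tset D n)`, and almost sure completeness says that
`P(Tset D n) = 1 - prefixProb P D n → 0`. Finally `|β| ≤ |α|` for every `α ∈ (D,β)`.
-/

open Set

section

variable {A : Type*}

def extensions (α : List A) (n : ℕ) : Set (List A) :=
  {γ | γ.length = n ∧ α <+: γ}

theorem strProb_append (P : PMF A) (l₁ l₂ : List A) :
    strProb P (l₁ ++ l₂) = strProb P l₁ * strProb P l₂ := by
  simp [strProb]

theorem strProb_cons (P : PMF A) (a : A) (l : List A) :
    strProb P (a :: l) = P a * strProb P l := by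
  simp [strProb]

theorem tsum_strProb_length_eq (P : PMF A) (n : ℕ) :
    ∑' γ : {γ : List A | γ.length = n}, strProb P γ = 1 := by
  induction n with
  | zero =>
    rw [show {γ : List A | γ.length = 0} = {[]} by ext; simp, tsum_singleton]
    simp [strProb]
  | succ k ih =>
    let cons : A × {δ : List A | δ.length = k} → List A := fun p => p.1 :: p.2.1
    have hcons : Function.Injective cons := by
      rintro ⟨a, δ, _⟩ ⟨b, ε, _⟩ h
      obtain ⟨rfl, rfl⟩ := List.cons_eq_cons.mp h
      rfl
    have hrange : {γ : List A | γ.length = k + 1} = range cons := by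
      ext (_ | ⟨a, δ⟩) <;> simp [cons]
    rw [tsum_congr_set_coe _ hrange, tsum_range _ hcons, ENNReal.tsum_prod']
    simp only [cons, strProb_cons, ENNReal.tsum_mul_left, ih, mul_one, PMF.tsum_coe]

theorem extensions_eq_image_append {α : List A} {n : ℕ} (h : α.length ≤ n) :
    extensions α n = (α ++ ·) '' {δ | δ.length = n - α.length} := by
  ext γ
  constructor
  · rintro ⟨hlen, δ, rfl⟩
    exact ⟨δ, by simp at hlen ⊢; omega, rfl⟩
  · rintro ⟨δ, hδ, rfl⟩
    exact ⟨by simp at hδ ⊢; omega, List.prefix_append _ _⟩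

theorem tsum_strProb_extensions (P : PMF A) {α : List A} {n : ℕ} (h : α.length ≤ n) :
    ∑' γ : extensions α n, strProb P γ = strProb P α := by
  rw [extensions_eq_image_append h, tsum_image _ (List.append_right_injective α).injOn]
  simp only [strProb_append, ENNReal.tsum_mul_left, tsum_strProb_length_eq, mul_one]

theorem tsum_strProb_extensions_le (P : PMF A) (α : List A) (n : ℕ) :
    ∑' γ : extensions α n, strProb P γ ≤ strProb P α := by
  by_cases h : α.length ≤ n
  · exact (tsum_strProb_extensions P h).le
  · have hempty : extensions α n = ∅ :=
      eq_empty_of_forall_notMem fun γ ⟨hlen, hαγ⟩ => h (hlen ▸ hαγ.length_le)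
    simp [hempty]

theorem prefixProb_add_tsum_strProb_Tset (P : PMF A) (D : Set (List A)) (n : ℕ) :
    prefixProb P D n + ∑' γ : Tset D n, strProb P γ = 1 := by
  have hsplit : {γ : List A | γ.length = n} =
      {γ | γ.length = n ∧ ∃ δ ∈ D, δ <+: γ} ∪ Tset D n := by
    ext γ
    simp only [Tset, mem_union, mem_ofPred_eq]
    by_cases hγ : ∃ δ ∈ D, δ <+: γ <;> simp_all
  have hdisj : Disjoint {γ : List A | γ.length = n ∧ ∃ δ ∈ D, δ <+: γ} (Tset D n) :=
    disjoint_left.mpr fun γ ⟨_, δ, hδ, hδγ⟩ hT => hT.2 δ hδ hδγ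
  rw [← tsum_strProb_length_eq P n, tsum_congr_set_coe _ hsplit,
    ENNReal.summable.tsum_union_disjoint hdisj ENNReal.summable]
  rfl

theorem IsASC.tendsto_tsum_strProb_Tset {P : PMF A} {D : Set (List A)} (hasc : IsASC P D) :
    Tendsto (fun n => ∑' γ : Tset D n, strProb P γ) atTop (nhds 0) := by
  have hsum := prefixProb_add_tsum_strProb_Tset P D
  have hfin : ∀ n, prefixProb P D n ≠ ⊤ := fun n =>
    ne_top_of_le_ne_top ENNReal.one_ne_top (le_self_add.trans_eq (hsum n))
  have hsub : ∀ n, ∑' γ : Tset D n, strProb P γ = 1 - prefixProb P D n := fun n =>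
    ENNReal.eq_sub_of_add_eq (hfin n) ((add_comm _ _).trans (hsum n))
  simp_rw [hsub]
  simpa using ENNReal.Tendsto.sub tendsto_const_nhds hasc (Or.inl ENNReal.one_ne_top)

theorem extensions_subset_biUnion_union_Tset {D : Set (List A)} {β : List A}
    (hβ : ∀ γ ∈ D, γ.length < β.length → ¬ γ <+: β) (n : ℕ) :
    extensions β n ⊆ (⋃ α ∈ {α ∈ D | β <+: α}, extensions α n) ∪ Tset D n := by
  rintro γ ⟨hlen, hβγ⟩
  by_cases hcov : ∃ δ ∈ D, δ <+: γ
  · obtain ⟨δ, hδD, hδγ⟩ := hcov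
    have hβδ : β <+: δ := by
      rcases List.prefix_or_prefix_of_prefix hδγ hβγ with hδβ | hβδ
      · have hle : β.length ≤ δ.length := not_lt.mp fun hlt => hβ δ hδD hlt hδβ
        exact hδβ.eq_of_length_le hle ▸ List.prefix_refl _
      · exact hβδ
    exact Or.inl (mem_biUnion ⟨hδD, hβδ⟩ ⟨hlen, hδγ⟩)
  · exact Or.inr ⟨hlen, fun δ hδ hδγ => hcov ⟨δ, hδ, hδγ⟩⟩

theorem strProb_le_tsum_strProb_of_extensions_subset (P : PMF A) {β : List A} {n : ℕ}
    {S T : Set (List A)} (hn : β.length ≤ n)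
    (hsub : extensions β n ⊆ (⋃ α ∈ S, extensions α n) ∪ T) :
    strProb P β ≤ ∑' α : S, strProb P α + ∑' γ : T, strProb P γ :=
  calc strProb P β = ∑' γ : extensions β n, strProb P γ :=
        (tsum_strProb_extensions P hn).symm
    _ ≤ ∑' γ : ↑((⋃ α ∈ S, extensions α n) ∪ T), strProb P γ :=
      ENNReal.tsum_mono_subtype _ hsub
    _ ≤ ∑' γ : ⋃ α ∈ S, extensions α n, strProb P γ + ∑' γ : T, strProb P γ :=
      ENNReal.tsum_union_le _ _ _
    _ ≤ (∑' α : S, ∑' γ : extensions (α : List A) n, strProb P γ)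
          + ∑' γ : T, strProb P γ :=
      add_le_add_left (ENNReal.tsum_biUnion_le_tsum _ _ _) _
    _ ≤ ∑' α : S, strProb P α + ∑' γ : T, strProb P γ :=
      add_le_add_left (ENNReal.tsum_le_tsum fun α : S => tsum_strProb_extensions_le P α n) _

theorem IsASC.strProb_le_tsum_strProb_prefixSet {P : PMF A} {D : Set (List A)}
    (hasc : IsASC P D) {β : List A} (hβ : ∀ γ ∈ D, γ.length < β.length → ¬ γ <+: β) :
    strProb P β ≤ ∑' α : {α ∈ D | β <+: α}, strProb P α := by
  have hbound : ∀ᶠ n in atTop, strProb P β ≤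
      ∑' α : {α ∈ D | β <+: α}, strProb P α + ∑' γ : Tset D n, strProb P γ :=
    (eventually_ge_atTop β.length).mono fun n hn =>
      strProb_le_tsum_strProb_of_extensions_subset P hn
        (extensions_subset_biUnion_union_Tset hβ n)
  simpa using ge_of_tendsto (tendsto_const_nhds.add hasc.tendsto_tsum_strProb_Tset) hbound

end

theorem strProb_mul_length_le_avgLen_prefixSet_general {A : Type*}
    (P : PMF A) (D : Set (List A)) (hasc : IsASC P D) (β : List A)
    (hβ : ∀ γ ∈ D, γ.length < β.length → ¬ γ <+: β) :
    strProb P β * β.length ≤ avgLen P {α ∈ D | β <+: α} :=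
  calc strProb P β * β.length
      ≤ (∑' α : {α ∈ D | β <+: α}, strProb P α) * β.length :=
        mul_le_mul_left (hasc.strProb_le_tsum_strProb_prefixSet hβ) _
    _ = ∑' α : {α ∈ D | β <+: α}, strProb P α * β.length := ENNReal.tsum_mul_right.symm
    _ ≤ avgLen P {α ∈ D | β <+: α} :=
        ENNReal.tsum_le_tsum fun α => mul_le_mul_right (Nat.cast_le.mpr α.2.2.length_le) _

/-- If `D` is proper and almost surely complete and no string
of `D` of length `< |β|` is a prefix of `β`, then
`∑_{α ∈ (D,β)} P(α)|α| ≥ P(β)|β|`. -/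
theorem strProb_mul_length_le_avgLen_prefixSet {A : Type*} [Countable A]
    (P : PMF A) (D : Set (List A)) (hdict : IsDictionary D)
    (hprop : IsProper D) (hasc : IsASC P D) (β : List A)
    (hβ : ∀ γ ∈ D, γ.length < β.length → ¬ γ <+: β) :
    strProb P β * β.length ≤ avgLen P {α ∈ D | β <+: α} :=
  strProb_mul_length_le_avgLen_prefixSet_general P D hasc β hβ
end
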